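/- Define C = 2π² ∑_{n,m ∈ ℤ} (1+n²+m²)² |φ^{nm}|², the energy-plus-enstrophy functional. Then C is a Casimir of the CHM Poisson operator with c = 0: for each fixed index i = (i₁,i₂), the sum ∑_{j ∈ ℤ²} C^{ij} φ^{i+j} ∂C/∂φ^{j} = 0, because in the sum each term at index j cancels the term at index j' = -i-j. -/

import Mathlib

open Real

/-- `1 + i₁² + i₂²` for a double index `i ∈ ℤ²`. -/
noncomputable def chmDenom (i : ℤ × ℤ) : ℝ := 1 + (i.1 : ℝ) ^ 2 + (i.2 : ℝ) ^ 2

/-- The structure constants `C^{ij}` of the CHM Poisson operator. -/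
noncomputable def chmC (i j : ℤ × ℤ) : ℂ :=
  (((i.1 * j.2 - i.2 * j.1 : ℤ) : ℂ) *
      ((1 + ((i.1 + j.1 : ℤ) : ℂ) ^ 2 + ((i.2 + j.2 : ℤ) : ℂ) ^ 2))) /
    (4 * π ^ 2 * chmDenom i * chmDenom j)

/-! The summand at `j` and the summand at `-i - j` cancel: the cross product `i₁j₂ - i₂j₁`
changes sign under `j ↦ -i - j`, while this substitution swaps `1 + |j|²` and `1 + |i + j|²`,
and after multiplying `C^{ij}` by `(1 + |j|²)²` these enter only through their product. -/

theorem finsum_eq_zero_of_involutive_of_map_eq_neg {α M : Type*} [AddCommGroup M]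
    [IsAddTorsionFree M] {e : α → α} (he : Function.Involutive e) {f : α → M}
    (hf : ∀ a, f (e a) = -f a) : ∑ᶠ a, f a = 0 :=
  self_eq_neg.mp <|
    calc ∑ᶠ a, f a = ∑ᶠ a, f (e a) := (finsum_comp_equiv (he.toPerm e)).symm
      _ = ∑ᶠ a, -f a := finsum_congr hf
      _ = -∑ᶠ a, f a := finsum_neg_distrib f

lemma chmDenom_pos (i : ℤ × ℤ) : 0 < chmDenom i := by
  unfold chmDenom
  positivity

lemma chmDenom_neg (i : ℤ × ℤ) : chmDenom (-i) = chmDenom i := by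
  simp [chmDenom]

lemma chmDenom_neg_sub (i j : ℤ × ℤ) : chmDenom (-i - j) = chmDenom (i + j) := by
  rw [← neg_add', chmDenom_neg]

lemma chmC_mul_chmDenom_sq (i j : ℤ × ℤ) :
    chmC i j * (chmDenom j : ℂ) ^ 2 =
      ((i.1 * j.2 - i.2 * j.1 : ℤ) : ℂ) * (chmDenom (i + j) * chmDenom j) /
        (4 * π ^ 2 * chmDenom i) := by
  have hj : (chmDenom j : ℂ) ≠ 0 := by exact_mod_cast (chmDenom_pos j).ne'
  simp only [chmC, chmDenom, Prod.fst_add, Prod.snd_add] at hj ⊢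
  field_simp
  push_cast
  ring

lemma chmC_neg_sub_mul_chmDenom_sq (i j : ℤ × ℤ) :
    chmC i (-i - j) * (chmDenom (i + j) : ℂ) ^ 2 = -(chmC i j * (chmDenom j : ℂ) ^ 2) := by
  rw [← chmDenom_neg_sub, chmC_mul_chmDenom_sq, chmC_mul_chmDenom_sq,
    show i + (-i - j) = -j by abel, chmDenom_neg, chmDenom_neg_sub]
  simp only [Prod.fst_sub, Prod.snd_sub, Prod.fst_neg, Prod.snd_neg]
  push_cast
  ring

theorem statement_15_general (φ : ℤ × ℤ → ℂ)
    (i : ℤ × ℤ) :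
    ∑ᶠ j : ℤ × ℤ,
      chmC i j * φ (i + j) *
        (4 * (π : ℂ) ^ 2 * ((chmDenom j : ℂ)) ^ 2 * φ (-j)) = 0 := by
  refine finsum_eq_zero_of_involutive_of_map_eq_neg (e := fun j => -i - j)
    (fun j => sub_sub_cancel (-i) j) fun j => ?_
  rw [show i + (-i - j) = -j by abel, show -(-i - j) = i + j by abel, chmDenom_neg_sub]
  linear_combination (4 * (π : ℂ) ^ 2 * φ (-j) * φ (i + j)) * chmC_neg_sub_mul_chmDenom_sq i j

/-- The energy-plus-enstrophy functional
`C = 2π² ∑ (1+n²+m²)² |φ^{nm}|²`, with gradient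
`∂C/∂φ^j = 4π² (1+j₁²+j₂²)² φ^{-j}`, is a Casimir of the CHM Poisson operator
with `c = 0`: for each fixed `i`, `∑_j C^{ij} φ^{i+j} ∂C/∂φ^j = 0`. -/
theorem statement_15 (φ : ℤ × ℤ → ℂ)
    (hsupp : (Function.support φ).Finite)
    (hreal : ∀ j : ℤ × ℤ, φ (-j) = starRingEnd ℂ (φ j))
    (i : ℤ × ℤ) :
    ∑ᶠ j : ℤ × ℤ,
      chmC i j * φ (i + j) *
        (4 * (π : ℂ) ^ 2 * ((chmDenom j : ℂ)) ^ 2 * φ (-j)) = 0 :=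
  statement_15_general φ i
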